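/- For every φ ∈ ℓ^{∞∞}(ℤ) there exists ψ ∈ ℓ^∞_c(ℤ) such that every nonzero level set of φ − ψ is finite. -/

import Mathlib

open Filter Topology

/-- A projection: a `{0,1}`-valued function. -/
def IsProj (p : ℤ → ℂ) : Prop := ∀ n, p n = 0 ∨ p n = 1

/-- Schwartz functions on `ℤ`: all moments `sup_n |n|^k |φ(n)|` are finite. -/
def IsSchwartz (φ : ℤ → ℂ) : Prop :=
  ∀ k : ℕ, ∃ C : ℝ, ∀ n : ℤ, (n.natAbs : ℝ)^k * ‖φ n‖ ≤ C

/-- Membership in `ℓ^{∞∞}(ℤ)`: `φ` is bounded and, for every ultrafilter `U` on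
`ℤ` and every `d ∈ ℕ`, `n^d (φ(n) − lim_U φ) → 0` along `U`. -/
def SmoothInf (φ : ℤ → ℂ) : Prop :=
  (∃ C, ∀ n, ‖φ n‖ ≤ C) ∧
  ∀ (U : Ultrafilter ℤ) (d : ℕ) (L : ℂ), Tendsto φ ↑U (nhds L) →
    Tendsto (fun n : ℤ => (n : ℂ)^d * (φ n - L)) ↑U (nhds 0)

/-!
Only finitely many values `c` of `φ` have an infinite level set, and `ψ` is `φ` restricted to
those level sets, a finite combination of indicators. If infinitely many level sets were
infinite, their values would accumulate at some `L`; picking, in the level set of each value `c`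
near `L`, a point `m` with `|m| ≥ 1 / |c - L|` gives a filter along which `φ → L` but
`|m (φ m - L)| ≥ 1`, against the decay condition with `d = 1`.
-/

lemma Set.Infinite.exists_le_norm_intCast {s : Set ℤ} (hs : s.Infinite) (r : ℝ) :
    ∃ m ∈ s, r ≤ ‖(m : ℂ)‖ := by
  have hlarge : ∀ᶠ m : ℤ in cofinite, r ≤ ‖(m : ℂ)‖ := by
    have := tendsto_norm_cocompact_atTop (E := ℤ)
    rw [cocompact_eq_cofinite] at this
    simpa [Int.norm_eq_abs] using this.eventually_ge_atTop r
  exact ((frequently_cofinite_iff_infinite.mpr hs).and_eventually hlarge).exists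

lemma isProj_indicator_one (s : Set ℤ) : IsProj (s.indicator 1) := by
  intro n
  by_cases hn : n ∈ s <;> simp [hn]

lemma mem_span_isProj_of_finite_range {f : ℤ → ℂ} (hf : (Set.range f).Finite) :
    f ∈ Submodule.span ℂ {p : ℤ → ℂ | IsProj p} := by
  have hsum : f = ∑ c ∈ hf.toFinset, c • (f ⁻¹' {c}).indicator 1 := by
    ext n
    rw [Finset.sum_apply, Finset.sum_eq_single_of_mem (f n) (by simp)]
    · simp
    · intro c _ hc
      simp [Ne.symm hc]
  rw [hsum]
  exact Submodule.sum_mem _ fun c _ =>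
    Submodule.smul_mem _ c (Submodule.subset_span (isProj_indicator_one _))

namespace SmoothInf

variable {φ : ℤ → ℂ}

lemma tendsto_pow_mul_sub (hφ : SmoothInf φ) {F : Filter ℤ} {L : ℂ}
    (hL : Tendsto φ F (𝓝 L)) (d : ℕ) :
    Tendsto (fun n : ℤ => (n : ℂ) ^ d * (φ n - L)) F (𝓝 0) :=
  (tendsto_iff_ultrafilter _ _ _).mpr fun U hU => hφ.2 U d L (hL.mono_left hU)

lemma finite_setOf_infinite_preimage (hφ : SmoothInf φ) :
    {c : ℂ | (φ ⁻¹' {c}).Infinite}.Finite := by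
  by_contra hT
  obtain ⟨C, hC⟩ := hφ.1
  have hball : {c : ℂ | (φ ⁻¹' {c}).Infinite} ⊆ Metric.closedBall 0 C := by
    intro c hc
    obtain ⟨m, hm⟩ := Set.Infinite.nonempty hc
    have hφm : φ m = c := hm
    simpa [← hφm] using hC m
  obtain ⟨L, -, hL⟩ :=
    Set.Infinite.exists_accPt_of_subset_isCompact hT (isCompact_closedBall 0 C) hball
  set A : Set ℤ := {m | 1 ≤ ‖(m : ℂ) * (φ m - L)‖}
  have hne : (comap φ (𝓝 L) ⊓ 𝓟 A).NeBot := by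
    refine inf_principal_neBot_iff.mpr fun U hU => ?_
    obtain ⟨V, hV, hVU⟩ := mem_comap.mp hU
    obtain ⟨c, ⟨hcV, hc⟩, hcL⟩ := accPt_iff_nhds.mp hL V hV
    have hpos : 0 < ‖c - L‖ := norm_pos_iff.mpr (sub_ne_zero.mpr hcL)
    obtain ⟨m, hm, hmc⟩ := Set.Infinite.exists_le_norm_intCast hc ‖c - L‖⁻¹
    have hφm : φ m = c := hm
    refine ⟨m, hVU (by simpa [hφm] using hcV), ?_⟩
    simpa [A, hφm, norm_mul] using (inv_le_iff_one_le_mul₀ hpos).mp hmc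
  have hlim : Tendsto (fun n : ℤ => (n : ℂ) ^ 1 * (φ n - L)) (comap φ (𝓝 L) ⊓ 𝓟 A) (𝓝 0) :=
    hφ.tendsto_pow_mul_sub (tendsto_comap.mono_left inf_le_left) 1
  have hsmall := (Metric.tendsto_nhds.mp hlim) 1 one_pos
  have hA : ∀ᶠ m in comap φ (𝓝 L) ⊓ 𝓟 A, m ∈ A := mem_inf_of_right (mem_principal_self A)
  obtain ⟨m, hm, hmA⟩ := (hsmall.and hA).exists
  simp only [pow_one, dist_zero_right] at hm
  exact absurd hmA (not_le.mpr hm)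

end SmoothInf

/-- For every `φ ∈ ℓ^{∞∞}(ℤ)` there is `ψ ∈ ℓ^∞_c(ℤ)` such that every nonzero
level set of `φ − ψ` is finite. -/
theorem stmt_16 (φ : ℤ → ℂ) (hφ : SmoothInf φ) :
    ∃ ψ ∈ Submodule.span ℂ {p : ℤ → ℂ | IsProj p},
      ∀ c : ℂ, c ≠ 0 → ((fun n => φ n - ψ n) ⁻¹' {c}).Finite := by
  set T := {c : ℂ | (φ ⁻¹' {c}).Infinite}
  have hT : T.Finite := hφ.finite_setOf_infinite_preimage
  refine ⟨(φ ⁻¹' T).indicator φ, mem_span_isProj_of_finite_range ?_, fun c hc => ?_⟩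
  · refine (hT.insert 0).subset ?_
    rintro _ ⟨n, rfl⟩
    by_cases hn : φ n ∈ T <;> simp [hn]
  · have hsub : (fun n => φ n - (φ ⁻¹' T).indicator φ n) ⁻¹' {c} ⊆ φ ⁻¹' {c} \ φ ⁻¹' T := by
      intro n hn
      by_cases hnT : φ n ∈ T <;> simp_all
    by_cases hcT : c ∈ T
    · refine Set.finite_empty.subset fun n hn => (hsub hn).2 ?_
      have hφn : φ n = c := (hsub hn).1
      rwa [Set.mem_preimage, hφn]
    · exact (Set.not_infinite.mp hcT).subset (hsub.trans Set.sdiff_subset)
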